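/- arXiv:2503.12571 — 7 statements merged into one kernel-verified Lean document; each statement's English description precedes it below -/
import Mathlib

section
/- Let X be a Hausdorff sequentially compact topological space and D a countable infinite subset of X. For every A ⊆ D, the set A can be covered by the ranges of finitely many sequences of elements of D that converge in X if and only if the set of accumulation points of A in X is finite. -/
open Set Filter Topology Ordinal

noncomputable section

/-- The derived set of `A`: the set of accumulation (limit) points of `A`. -/
def derivSet {X : Type*} [TopologicalSpace X] (A : Set X) : Set X :=
  {p | p ∈ closure (A \ {p})}

/-- The ordinal space `ω^a + 1 = [0, ω^a]` with the (order) topology. -/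
abbrev OrdSpace (a : Ordinal) : Type _ := ↥(Set.Iic (omega0 ^ a))

/-- The ideal `conv_a` on `ω^a + 1`: sets with finite derived set. -/
def convIdeal (a : Ordinal) : Set (Set (OrdSpace a)) :=
  {A | (derivSet A).Finite}

/-- `I` is an ideal of subsets. -/
structure IsIdeal {S : Type*} (I : Set (Set S)) : Prop where
  empty_mem : ∅ ∈ I
  subset_mem : ∀ {A B : Set S}, A ⊆ B → B ∈ I → A ∈ I
  union_mem : ∀ {A B : Set S}, A ∈ I → B ∈ I → A ∪ B ∈ I

/-- The subsequence of `f` indexed by `A` converges to `x`. -/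
def ConvAlong {X : Type*} [TopologicalSpace X] (f : ℕ → X) (A : Set ℕ) (x : X) : Prop :=
  ∀ U ∈ nhds x, {n ∈ A | f n ∉ U}.Finite

/-- Katětov order: `J ≤_K I`, where `I` lives on `X` and `J` on `Y`. -/
def KatetovLE {X Y : Type*} (J : Set (Set Y)) (I : Set (Set X)) : Prop :=
  ∃ f : X → Y, ∀ A ∈ J, f ⁻¹' A ∈ I

/-- `X ∈ FinBW(I)`: every sequence in `X` has a convergent subsequence indexed
by an `I`-positive set. -/
def InFinBW (I : Set (Set ℕ)) (X : Type*) [TopologicalSpace X] : Prop :=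
  ∀ f : ℕ → X, ∃ A : Set ℕ, A ∉ I ∧ ∃ x : X, ConvAlong f A x

/-!
A set `S` with `S \ W` finite for every open `W ⊇ F` (`F` compact) has all its accumulation
points in `F`, by Hausdorff separation; conversely, in a countably compact space every infinite
set has an accumulation point, so `S \ W` is finite whenever `W` is an open set containing the
derived set of `S`. Hence the range of a convergent sequence has at most one accumulation point,
which gives one direction. For the other, separate the finitely many accumulation points of `A`
by disjoint open sets `U x`: each piece `A ∩ U x` is countable and accumulates only at `x`, so it
is the range of a sequence converging to `x`, and what is left of `A` outside `⋃ U x` is finite.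
-/

section DerivedSet

variable {X : Type*} [TopologicalSpace X]

lemma derivSet_eq_derivedSet (A : Set X) : derivSet A = derivedSet A := by
  ext p
  rw [mem_derivedSet, accPt_principal_iff_clusterPt, ← mem_closure_iff_clusterPt]
  rfl

lemma Set.Finite.not_accPt [T1Space X] {S : Set X} (hS : S.Finite) (p : X) :
    ¬AccPt p (𝓟 S) := fun h =>
  ((hS.sdiff (t := {p})).isClosed.closure_subset
    (mem_closure_iff_clusterPt.2 (accPt_principal_iff_clusterPt.1 h))).2 rfl

lemma derivedSet_subset_of_finite_diff [T2Space X] {S F : Set X} (hF : IsCompact F)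
    (h : ∀ W, IsOpen W → F ⊆ W → (S \ W).Finite) : derivedSet S ⊆ F := by
  intro p hp
  by_contra hpF
  obtain ⟨U, W, hU, hW, hpU, hFW, hUW⟩ :=
    SeparatedNhds.of_isCompact_isCompact isCompact_singleton hF (disjoint_singleton_left.2 hpF)
  have hfin : (U ∩ S).Finite :=
    (h W hW hFW).subset fun y hy => ⟨hy.2, disjoint_left.1 hUW hy.1⟩
  exact hfin.not_accPt p (AccPt.nhds_inter hp (hU.mem_nhds (hpU rfl)))

lemma finite_diff_of_derivedSet_subset [CountablyCompactSpace X] {S W : Set X} (hW : IsOpen W)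
    (h : derivedSet S ⊆ W) : (S \ W).Finite := by
  by_contra hinf
  obtain ⟨p, -, hp⟩ :=
    CountablyCompactSpace.isCountablyCompact_univ.exists_accPt_of_infinite (subset_univ _) hinf
  have hpW : p ∈ W := h (derivedSet_mono _ _ sdiff_subset hp)
  have hpW' : p ∈ closure (S \ W) := derivedSet_subset_closure _ hp
  exact hW.isClosed_compl.closure_subset_iff.2 (fun _ hy => hy.2) hpW' hpW

lemma Filter.Tendsto.finite_range_diff {u : ℕ → X} {x : X} (hu : Tendsto u atTop (𝓝 x))
    {W : Set X} (hW : W ∈ 𝓝 x) : (range u \ W).Finite := by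
  obtain ⟨N, hN⟩ := eventually_atTop.1 (hu hW)
  refine ((finite_Iio N).image u).subset ?_
  rintro _ ⟨⟨n, rfl⟩, hn⟩
  exact ⟨n, lt_of_not_ge fun h => hn (hN n h), rfl⟩

lemma exists_range_eq_and_tendsto {S : Set X} (hSc : S.Countable) (hSi : S.Infinite) {x : X}
    (h : ∀ W ∈ 𝓝 x, (S \ W).Finite) : ∃ u : ℕ → X, range u = S ∧ Tendsto u atTop (𝓝 x) := by
  have := hSc.to_subtype
  have := hSi.to_subtype
  obtain ⟨_⟩ := nonempty_denumerable S
  let e : ℕ ≃ S := (Denumerable.eqv S).symm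
  have hval : Tendsto ((↑) : S → X) cofinite (𝓝 x) := fun W hW => by
    rw [mem_map, mem_cofinite]
    convert (h W hW).preimage Subtype.val_injective.injOn using 1
    ext s
    simp
  refine ⟨(↑) ∘ e, by simp [range_comp, e.range_eq_univ], ?_⟩
  rw [← Nat.cofinite_eq_atTop]
  exact hval.comp e.injective.tendsto_cofinite

end DerivedSet

section ConvCoverable

variable {X : Type*} [TopologicalSpace X] {D S T : Set X}

/-- `ConvCoverable D S` means `S ∈ conv(D)`. -/
def ConvCoverable (D S : Set X) : Prop :=
  ∃ (k : ℕ) (d : Fin k → ℕ → X),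
    (∀ i n, d i n ∈ D) ∧ (∀ i, ∃ x : X, Tendsto (d i) atTop (𝓝 x)) ∧
    S ⊆ ⋃ i : Fin k, range (d i)

lemma convCoverable_empty : ConvCoverable D ∅ :=
  ⟨0, Fin.elim0, fun i => i.elim0, fun i => i.elim0, empty_subset _⟩

lemma convCoverable_range {u : ℕ → X} (huD : ∀ n, u n ∈ D) {x : X}
    (hu : Tendsto u atTop (𝓝 x)) : ConvCoverable D (range u) :=
  ⟨1, fun _ => u, fun _ => huD, fun _ => ⟨x, hu⟩, subset_iUnion (fun _ : Fin 1 => range u) 0⟩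

lemma convCoverable_singleton {a : X} (ha : a ∈ D) : ConvCoverable D {a} := by
  simpa using convCoverable_range (fun _ : ℕ => ha) tendsto_const_nhds

lemma ConvCoverable.union (hS : ConvCoverable D S) (hT : ConvCoverable D T) :
    ConvCoverable D (S ∪ T) := by
  obtain ⟨k, d, hdD, hd, hSd⟩ := hS
  obtain ⟨l, e, heD, he, hTe⟩ := hT
  refine ⟨k + l, Fin.append d e, Fin.addCases (by simpa using hdD) (by simpa using heD),
    Fin.addCases (by simpa using hd) (by simpa using he), union_subset ?_ ?_⟩
  · refine hSd.trans (iUnion_subset fun i => ?_)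
    simpa using subset_iUnion (fun j => range (Fin.append d e j)) (Fin.castAdd l i)
  · refine hTe.trans (iUnion_subset fun i => ?_)
    simpa using subset_iUnion (fun j => range (Fin.append d e j)) (Fin.natAdd k i)

lemma convCoverable_biUnion {ι : Type*} {E : Set ι} (hE : E.Finite) {g : ι → Set X}
    (h : ∀ x ∈ E, ConvCoverable D (g x)) : ConvCoverable D (⋃ x ∈ E, g x) := by
  induction E, hE using Set.Finite.induction_on with
  | empty => simpa using convCoverable_empty
  | insert _ _ ih =>
    rw [biUnion_insert]
    exact (h _ (mem_insert _ _)).union (ih fun x hx => h x (mem_insert_of_mem _ hx))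

lemma Set.Finite.convCoverable (hS : S.Finite) (hSD : S ⊆ D) : ConvCoverable D S := by
  simpa using convCoverable_biUnion hS fun a ha => convCoverable_singleton (hSD ha)

lemma ConvCoverable.derivedSet_finite [T2Space X] (hS : ConvCoverable D S) :
    (derivedSet S).Finite := by
  obtain ⟨k, d, -, hd, hSd⟩ := hS
  choose x hx using hd
  refine (finite_range x).subset
    ((derivedSet_mono _ _ hSd).trans (derivedSet_subset_of_finite_diff (finite_range x).isCompact
      fun W hW hxW => ?_))
  rw [iUnion_sdiff]
  exact finite_iUnion fun i => (hx i).finite_range_diff (hW.mem_nhds (hxW (mem_range_self i)))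

lemma convCoverable_of_derivedSet_subset_singleton [CountablyCompactSpace X]
    (hSc : S.Countable) (hSD : S ⊆ D) {x : X} (h : derivedSet S ⊆ {x}) : ConvCoverable D S := by
  rcases S.finite_or_infinite with hfin | hinf
  · exact hfin.convCoverable hSD
  have hconv : ∀ W ∈ 𝓝 x, (S \ W).Finite := fun W hW =>
    (finite_diff_of_derivedSet_subset isOpen_interior
      (h.trans (singleton_subset_iff.2 (mem_interior_iff_mem_nhds.2 hW)))).subset
      (sdiff_subset_sdiff_right interior_subset)
  obtain ⟨u, rfl, hu⟩ := exists_range_eq_and_tendsto hSc hinf hconv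
  exact convCoverable_range (fun n => hSD (mem_range_self n)) hu

lemma convCoverable_of_derivedSet_finite [T2Space X] [CountablyCompactSpace X]
    (hSc : S.Countable) (hSD : S ⊆ D) (hE : (derivedSet S).Finite) : ConvCoverable D S := by
  set E := derivedSet S
  obtain ⟨U, hU, hUE⟩ := hE.t2_separation
  have hpiece : ∀ x ∈ E, derivedSet (S ∩ U x) ⊆ {x} := by
    intro x hx p hp
    have hpE : p ∈ E := derivedSet_mono _ _ inter_subset_left hp
    have hpU : p ∈ closure (U x) :=
      closure_mono inter_subset_right (derivedSet_subset_closure _ hp)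
    by_contra hpx
    exact disjoint_left.1 ((hUE hpE hx hpx).symm.closure_left (hU p).2) hpU (hU p).1
  have hrest : (S \ ⋃ x ∈ E, U x).Finite :=
    finite_diff_of_derivedSet_subset (isOpen_biUnion fun x _ => (hU x).2)
      fun p hp => mem_biUnion hp (hU p).1
  rw [← sdiff_union_inter S (⋃ x ∈ E, U x), inter_iUnion₂]
  exact (hrest.convCoverable (sdiff_subset.trans hSD)).union
    (convCoverable_biUnion hE fun x hx => convCoverable_of_derivedSet_subset_singleton
      (hSc.mono inter_subset_left) (inter_subset_left.trans hSD) (hpiece x hx))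

end ConvCoverable

theorem stmt0_general {X : Type*} [TopologicalSpace X] [T2Space X] [SeqCompactSpace X]
    (D : Set X) (hDc : D.Countable)
    (A : Set X) (hAD : A ⊆ D) :
    (∃ (k : ℕ) (d : Fin k → ℕ → X),
        (∀ i n, d i n ∈ D) ∧ (∀ i, ∃ x : X, Tendsto (d i) atTop (nhds x)) ∧
        A ⊆ ⋃ i : Fin k, Set.range (d i))
      ↔ (derivSet A).Finite := by
  rw [derivSet_eq_derivedSet]
  exact ⟨ConvCoverable.derivedSet_finite,
    convCoverable_of_derivedSet_finite (hDc.mono hAD) hAD⟩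

/-- A subset of a countable infinite `D` in a Hausdorff sequentially compact space is
coverable by ranges of finitely many `D`-valued convergent sequences iff its derived
set is finite. -/
theorem stmt0 {X : Type*} [TopologicalSpace X] [T2Space X] [SeqCompactSpace X]
    (D : Set X) (hDc : D.Countable) (hDi : D.Infinite)
    (A : Set X) (hAD : A ⊆ D) :
    (∃ (k : ℕ) (d : Fin k → ℕ → X),
        (∀ i n, d i n ∈ D) ∧ (∀ i, ∃ x : X, Tendsto (d i) atTop (nhds x)) ∧
        A ⊆ ⋃ i : Fin k, Set.range (d i))
      ↔ (derivSet A).Finite :=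
  stmt0_general D hDc A hAD
end
end

section
/- Let α ≥ 2 be a countable ordinal and A ⊆ ω^{α+1} + 1. Then A ∈ conv_{α+1} if and only if (a) A ∩ (ω^α·n, ω^α·(n+1)] is finite for all but finitely many n, and (b) for every n, the derived set of A ∩ (ω^α·n, ω^α·(n+1)] is finite. -/
open Set Filter Topology Ordinal

noncomputable section

/-!
In a successor order such as the ordinals, a point is an accumulation point of a set only
through points below it, so a point of the block `(ω^a·n, ω^a·(n+1)]` accumulates `A` iff it
accumulates the part of `A` in that block. By compactness of closed intervals, every infinite
block part has an accumulation point inside its block, and the blocks are disjoint. Hence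
infinitely many infinite blocks give infinitely many derived points; conversely, if only
finitely many blocks are infinite and each has finitely many derived points, the derived set of
`A` consists of those points and possibly `ω^(a+1)`.
-/

theorem mem_derivSet_subtype_iff {X : Type*} [TopologicalSpace X] {s : Set X} {A : Set s}
    {p : s} : p ∈ derivSet A ↔ (p : X) ∈ derivedSet (Subtype.val '' A) := by
  rw [derivSet, mem_ofPred_eq, closure_subtype, image_sdiff Subtype.val_injective,
    image_singleton, mem_closure_iff_clusterPt, mem_derivedSet, accPt_principal_iff_clusterPt]

theorem IsClosed.image_val_derivSet {X : Type*} [TopologicalSpace X] {s : Set X}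
    (hs : IsClosed s) (A : Set s) :
    Subtype.val '' derivSet A = derivedSet (Subtype.val '' A) := by
  refine Subset.antisymm ?_ fun q hq => ?_
  · rintro _ ⟨p, hp, rfl⟩
    exact mem_derivSet_subtype_iff.mp hp
  · have hqs : q ∈ s := closure_minimal image_val_subset hs (derivedSet_subset_closure _ hq)
    exact ⟨⟨q, hqs⟩, mem_derivSet_subtype_iff.mpr hq, rfl⟩

theorem IsClosed.derivSet_finite_iff {X : Type*} [TopologicalSpace X] {s : Set X}
    (hs : IsClosed s) (A : Set s) :
    (derivSet A).Finite ↔ (derivedSet (Subtype.val '' A)).Finite := by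
  rw [← hs.image_val_derivSet, finite_image_iff Subtype.val_injective.injOn]

theorem Set.Finite.derivedSet_eq_empty {X : Type*} [TopologicalSpace X] [T1Space X]
    {C : Set X} (hC : C.Finite) : derivedSet C = ∅ := by
  refine eq_empty_of_forall_notMem fun x hx => ?_
  rw [mem_derivedSet, accPt_principal_iff_clusterPt, ← mem_closure_iff_clusterPt,
    (hC.sdiff (t := {x})).isClosed.closure_eq] at hx
  exact hx.2 rfl

section SuccOrder

variable {α : Type*} [LinearOrder α] [TopologicalSpace α] [OrderTopology α] [SuccOrder α]
  [NoMaxOrder α]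

theorem AccPt.exists_mem_lt {q : α} {s : Set α} (h : AccPt q (𝓟 s)) : ∃ x ∈ s, x < q := by
  obtain ⟨hmin, hs⟩ := SuccOrder.accPt_principal.mp h
  obtain ⟨b, hb⟩ := not_isMin_iff.mp hmin
  obtain ⟨x, hxs, hx⟩ := hs b hb
  exact ⟨x, hxs, hx.2⟩

theorem accPt_inter_Ioc_iff {q l u : α} {s : Set α} (hq : q ∈ Ioc l u) :
    AccPt q (𝓟 (s ∩ Ioc l u)) ↔ AccPt q (𝓟 s) := by
  refine ⟨fun h => h.mono (principal_mono.mpr inter_subset_left), fun h => ?_⟩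
  obtain ⟨hmin, hs⟩ := SuccOrder.accPt_principal.mp h
  refine SuccOrder.accPt_principal.mpr ⟨hmin, fun b hb => ?_⟩
  obtain ⟨x, hxs, hx⟩ := hs (max b l) (max_lt hb hq.1)
  exact ⟨x, ⟨hxs, (le_max_right b l).trans_lt hx.1, hx.2.le.trans hq.2⟩,
    (le_max_left b l).trans_lt hx.1, hx.2⟩

theorem Set.Infinite.exists_accPt_of_subset_Ioc [CompactIccSpace α] {l u : α} {T : Set α}
    (hT : T.Infinite) (hsub : T ⊆ Ioc l u) : ∃ q ∈ Ioc l u, AccPt q (𝓟 T) := by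
  obtain ⟨q, hq, hacc⟩ :=
    hT.exists_accPt_of_subset_isCompact isCompact_Icc (hsub.trans Ioc_subset_Icc_self)
  obtain ⟨x, hxT, hxq⟩ := hacc.exists_mem_lt
  exact ⟨q, ⟨(hsub hxT).1.trans hxq, hq.2⟩, hacc⟩

end SuccOrder

def block (w : Ordinal) (n : ℕ) : Set Ordinal :=
  Ioc (w * n) (w * ((n : Ordinal) + 1))

theorem pairwise_disjoint_block (w : Ordinal) :
    Pairwise (Function.onFun Disjoint (block w)) := by
  suffices ∀ {m n : ℕ}, m < n → Disjoint (block w m) (block w n) from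
    fun m n hmn => hmn.lt_or_gt.elim this fun h => (this h).symm
  intro m n hmn
  have hle : w * ((m : Ordinal) + 1) ≤ w * n := by
    gcongr
    exact_mod_cast Nat.succ_le_of_lt hmn
  exact Set.disjoint_left.mpr fun x hxm hxn => (hxn.1.trans_le hxm.2).not_ge hle

theorem exists_mem_block {w q : Ordinal} (h0 : 0 < q) (hq : q < w * ω) :
    ∃ n : ℕ, q ∈ block w n := by
  classical
  obtain ⟨c, hc, hqc⟩ := (lt_mul_iff_of_isSuccLimit isSuccLimit_omega0).mp hq
  obtain ⟨m, rfl⟩ := lt_omega0.mp hc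
  have hex : ∃ k : ℕ, q ≤ w * k := ⟨m, hqc.le⟩
  obtain ⟨n, hn⟩ : ∃ n, Nat.find hex = n + 1 :=
    Nat.exists_eq_succ_of_ne_zero fun hk => h0.ne' (by simpa [hk] using Nat.find_spec hex)
  refine ⟨n, not_le.mp (Nat.find_min hex (by omega)), ?_⟩
  simpa [hn] using Nat.find_spec hex

theorem infinite_derivedSet_of_infinite_blocks {w : Ordinal} {S : Set Ordinal}
    (h : {n : ℕ | (S ∩ block w n).Infinite}.Infinite) : (derivedSet S).Infinite := by
  choose! q hq hacc using fun n (hn : (S ∩ block w n).Infinite) =>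
    hn.exists_accPt_of_subset_Ioc inter_subset_right
  have hinj : InjOn q {n | (S ∩ block w n).Infinite} := fun m hm n hn hmn => by
    by_contra hne
    exact Set.disjoint_left.mp (pairwise_disjoint_block w hne) (hq m hm) (hmn ▸ hq n hn)
  exact infinite_of_injOn_mapsTo hinj
    (fun n hn => derivedSet_mono _ _ inter_subset_left (hacc n hn)) h

theorem derivedSet_subset_insert_biUnion {w : Ordinal} {S : Set Ordinal}
    (hS : S ⊆ Iic (w * ω)) :
    derivedSet S ⊆ insert (w * ω)
      (⋃ n ∈ {n : ℕ | (S ∩ block w n).Infinite}, derivedSet (S ∩ block w n)) := by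
  intro q hq
  have hq_le : q ≤ w * ω := closure_minimal hS isClosed_Iic (derivedSet_subset_closure S hq)
  rcases hq_le.eq_or_lt with rfl | hlt
  · exact mem_insert _ _
  obtain ⟨x, -, hxq⟩ := AccPt.exists_mem_lt hq
  obtain ⟨n, hn⟩ := exists_mem_block (zero_le.trans_lt hxq) hlt
  have hacc : q ∈ derivedSet (S ∩ block w n) := (accPt_inter_Ioc_iff hn).mpr hq
  have hinf : (S ∩ block w n).Infinite := fun hfin => by
    simp [hfin.derivedSet_eq_empty] at hacc
  exact mem_insert_of_mem _ (mem_biUnion hinf hacc)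

theorem derivedSet_finite_iff_blocks {w : Ordinal} {S : Set Ordinal} (hS : S ⊆ Iic (w * ω)) :
    (derivedSet S).Finite ↔
      (∀ᶠ n : ℕ in atTop, (S ∩ block w n).Finite) ∧
        ∀ n, (derivedSet (S ∩ block w n)).Finite := by
  rw [← Nat.cofinite_eq_atTop, eventually_cofinite]
  refine ⟨fun h => ⟨?_, fun n => h.subset (derivedSet_mono _ _ inter_subset_left)⟩,
    fun ⟨hfin, hder⟩ => ?_⟩
  · by_contra hinf
    exact infinite_derivedSet_of_infinite_blocks hinf h
  · exact ((hfin.biUnion fun n _ => hder n).insert _).subset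
      (derivedSet_subset_insert_biUnion hS)

theorem stmt4_general (a : Ordinal) (A : Set (OrdSpace (a + 1))) :
    A ∈ convIdeal (a + 1) ↔
      ((∀ᶠ n : ℕ in atTop,
          {x ∈ A | omega0 ^ a * (n : Ordinal) < (x : Ordinal) ∧
            (x : Ordinal) ≤ omega0 ^ a * ((n : Ordinal) + 1)}.Finite) ∧
       ∀ n : ℕ,
          (derivSet {x ∈ A | omega0 ^ a * (n : Ordinal) < (x : Ordinal) ∧
            (x : Ordinal) ≤ omega0 ^ a * ((n : Ordinal) + 1)}).Finite) := by
  have hblock (n : ℕ) : Subtype.val '' {x ∈ A | omega0 ^ a * (n : Ordinal) < (x : Ordinal) ∧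
      (x : Ordinal) ≤ omega0 ^ a * ((n : Ordinal) + 1)} = Subtype.val '' A ∩ block (ω ^ a) n :=
    image_inter_preimage Subtype.val A (block (ω ^ a) n)
  have hA : Subtype.val '' A ⊆ Iic (ω ^ a * ω) := by
    rintro _ ⟨x, -, rfl⟩
    simpa [opow_add] using x.2
  simp only [convIdeal, mem_ofPred_eq, isClosed_Iic.derivSet_finite_iff,
    ← finite_image_iff Subtype.val_injective.injOn, hblock]
  exact derivedSet_finite_iff_blocks hA

/-- Characterization of `conv_{a+1}`: `A ∈ conv_{a+1}` iff all but finitely many of the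
blocks `A ∩ (ω^a·n, ω^a·(n+1)]` are finite and every block has finite derived set. -/
theorem stmt4 (a : Ordinal) (ha : 2 ≤ a) (hac : a.card ≤ Cardinal.aleph0)
    (A : Set (OrdSpace (a + 1))) :
    A ∈ convIdeal (a + 1) ↔
      ((∀ᶠ n : ℕ in atTop,
          {x ∈ A | omega0 ^ a * (n : Ordinal) < (x : Ordinal) ∧
            (x : Ordinal) ≤ omega0 ^ a * ((n : Ordinal) + 1)}.Finite) ∧
       ∀ n : ℕ,
          (derivSet {x ∈ A | omega0 ^ a * (n : Ordinal) < (x : Ordinal) ∧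
            (x : Ordinal) ≤ omega0 ^ a * ((n : Ordinal) + 1)}).Finite) :=
  stmt4_general a A
end
end

section
/- Each ideal conv_α (α ≥ 2 a countable ordinal) is a Σ⁰₄ (i.e., F_{σδσ}) subset of the Cantor space P(ω^α+1) ≅ 2^ω (after identifying the countable set ω^α+1 with ω). -/
open Set Filter Topology Ordinal

noncomputable section

/-!
In a countable first countable space `X`, fix for every point `x` a countable neighbourhood
basis `B x k`. Then `x` is not an accumulation point of `A` iff some `B x k` meets `A` at most
in `x`, a closed condition on the characteristic function of `A`. Hence
`{A | derivSet A is finite} = ⋃_F ⋂_x (x ∈ F ∨ ⋃_k {A | A ∩ B x k ⊆ {x}})`, with `F` ranging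
over the countably many finite subsets of `X`: a `Σ⁰₄` set. The ordinal space `[0, ω^a]` is
countable for countable `a`, and carries the order topology, so it is first countable.
-/

lemma isClosed_setOf_forall_eq_false {X : Type*} (U : Set X) :
    IsClosed {χ : X → Bool | ∀ y ∈ U, χ y = false} := by
  simp only [ofPred_forall]
  exact isClosed_biInter fun y _ => isClosed_eq (continuous_apply y) continuous_const

lemma notMem_derivSet_iff_of_basis {X ι : Type*} [TopologicalSpace X] {A : Set X} {x : X}
    {p : ι → Prop} {B : ι → Set X} (hB : (𝓝 x).HasBasis p B) :
    x ∉ derivSet A ↔ ∃ k, p k ∧ ∀ y ∈ B k, y ≠ x → y ∉ A := by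
  simp only [derivSet, mem_ofPred_eq, mem_closure_iff_nhds_basis hB, Set.mem_sdiff,
    mem_singleton_iff]
  grind

lemma finite_iff_exists_subset_of_surjective {α : Type*} {s : Set α} {e : ℕ → Finset α}
    (he : Function.Surjective e) : s.Finite ↔ ∃ i, s ⊆ e i := by
  refine ⟨fun hs => ?_, fun ⟨i, hi⟩ => (e i).finite_toSet.subset hi⟩
  obtain ⟨i, hi⟩ := he hs.toFinset
  exact ⟨i, by simp [hi]⟩

theorem exists_sigma04_setOf_derivSet_finite (X : Type*) [TopologicalSpace X]
    [FirstCountableTopology X] [Countable X] [Nonempty X] :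
    ∃ C : ℕ → ℕ → ℕ → Set (X → Bool), (∀ i j k, IsClosed (C i j k)) ∧
      {χ : X → Bool | (derivSet {x | χ x = true}).Finite} = ⋃ i, ⋂ j, ⋃ k, C i j k := by
  choose B hB using fun x : X => (𝓝 x).exists_antitone_basis
  obtain ⟨g, hg⟩ := exists_surjective_nat X
  obtain ⟨e, he⟩ := exists_surjective_nat (Finset X)
  refine ⟨fun i j k => {χ | g j ∈ e i} ∪ {χ | ∀ y ∈ B (g j) k \ {g j}, χ y = false},
    fun i j k => isClosed_const.union (isClosed_setOf_forall_eq_false _), ?_⟩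
  ext χ
  have hnot : ∀ x, x ∉ derivSet {x | χ x = true} ↔
      ∃ k, ∀ y ∈ B x k \ {x}, χ y = false := fun x => by
    simp [notMem_derivSet_iff_of_basis (hB x).toHasBasis]
  simp only [mem_ofPred_eq, finite_iff_exists_subset_of_surjective he, mem_iUnion,
    mem_iInter, mem_union]
  refine exists_congr fun i => ⟨fun hi j => ?_, fun hi x hx => ?_⟩
  · by_cases hj : g j ∈ e i
    · exact ⟨0, Or.inl hj⟩
    · obtain ⟨k, hk⟩ := (hnot (g j)).1 fun hd => hj (hi hd)
      exact ⟨k, Or.inr hk⟩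
  · obtain ⟨j, rfl⟩ := hg x
    obtain ⟨k, hk | hk⟩ := hi j
    · exact hk
    · exact absurd hx ((hnot _).2 ⟨k, hk⟩)

lemma countable_Iic_of_card_le_aleph0 {o : Ordinal} (ho : o.card ≤ Cardinal.aleph0) :
    (Iic o).Countable := by
  rw [← Order.Iio_succ, Order.succ_eq_add_one, ← countable_coe_iff, ← Cardinal.mk_le_aleph0_iff,
    Cardinal.mk_Iio_ordinal, Ordinal.card_add_one, Cardinal.lift_le_aleph0]
  exact Cardinal.add_le_aleph0.2 ⟨ho, Cardinal.one_le_aleph0⟩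

theorem stmt7_general (a : Ordinal) (hac : a.card ≤ Cardinal.aleph0) :
    ∃ C : ℕ → ℕ → ℕ → Set (OrdSpace a → Bool),
      (∀ i j k, IsClosed (C i j k)) ∧
      {χ : OrdSpace a → Bool | {x : OrdSpace a | χ x = true} ∈ convIdeal a}
        = ⋃ i, ⋂ j, ⋃ k, C i j k := by
  have hcard : (omega0 ^ a).card ≤ Cardinal.aleph0 :=
    (card_opow_le _ _).trans (by simp [hac])
  have : Countable (OrdSpace a) := (countable_Iic_of_card_le_aleph0 hcard).to_subtype
  have : Nonempty (OrdSpace a) := ⟨⟨0, mem_Iic.2 zero_le⟩⟩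
  exact exists_sigma04_setOf_derivSet_finite (OrdSpace a)

/-- `conv_a` is `Σ⁰₄` (i.e. `F_{σδσ}`) as a subset of the Cantor space `2^(ω^a+1)`:
it is a countable union of countable intersections of countable unions of closed sets. -/
theorem stmt7 (a : Ordinal) (ha : 2 ≤ a) (hac : a.card ≤ Cardinal.aleph0) :
    ∃ C : ℕ → ℕ → ℕ → Set (OrdSpace a → Bool),
      (∀ i j k, IsClosed (C i j k)) ∧
      {χ : OrdSpace a → Bool | {x : OrdSpace a | χ x = true} ∈ convIdeal a}
        = ⋃ i, ⋂ j, ⋃ k, C i j k :=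
  stmt7_general a hac
end
end

section
/- Let I be an ideal on ω containing all finite sets, and let α be a countable ordinal. If f : ω → ω^α is a function with f⁻¹(ξ) ∈ I for each ξ < ω^α, then for every B ⊆ ω with B ∉ I there exists a strictly increasing sequence (λ_n) in ω^α such that B ∩ f⁻¹[[λ_n, λ_{n+1})] ∈ I for each n and B ∩ f⁻¹[[λ_0, λ)] ∉ I, where λ = sup_n λ_n. -/
open Set Filter Topology Ordinal

noncomputable section

/-!
Let `δ` be the least ordinal with `B ∩ f⁻¹[0, δ)` not in `I`. As the fibres of `f` lie in `I`, `δ`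
is neither `0` nor a successor, and it is countable, so it is the supremum of a strictly increasing
sequence `λ_n`. Each `B ∩ f⁻¹[λ_n, λ_{n+1})` lies inside `B ∩ f⁻¹[0, λ_{n+1})`, which is in `I` by
minimality of `δ`; and `B ∩ f⁻¹[λ_0, δ)` is not in `I`, for otherwise adding `B ∩ f⁻¹[0, λ_0) ∈ I`
would put `B ∩ f⁻¹[0, δ)` into `I`.
-/

universe u

theorem Ordinal.exists_strictMono_lt_iSup_eq {δ : Ordinal.{u}} (hδ : Order.IsSuccLimit δ)
    (hδc : δ.card ≤ Cardinal.aleph0) :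
    ∃ l : ℕ → Ordinal, StrictMono l ∧ (∀ n, l n < δ) ∧ ⨆ n, l n = δ := by
  have : Countable (Iio δ) := by
    rw [← Cardinal.mk_le_aleph0_iff, Cardinal.mk_Iio_ordinal, ← Cardinal.lift_aleph0.{u + 1, u},
      Cardinal.lift_le]
    exact hδc
  have : Nonempty (Iio δ) := ⟨⟨0, hδ.bot_lt⟩⟩
  have : NoMaxOrder (Iio δ) :=
    ⟨fun β => ⟨⟨Order.succ β, hδ.succ_lt β.2⟩, Order.lt_succ (β : Ordinal)⟩⟩
  obtain ⟨x, -, hx⟩ := exists_seq_monotone_tendsto_atTop_atTop (Iio δ)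
  obtain ⟨φ, hφ, hxφ⟩ := strictMono_subseq_of_tendsto_atTop hx
  set l : ℕ → Ordinal.{u} := fun n => x (φ n)
  refine ⟨l, fun m n h => hxφ h, fun n => (x (φ n)).2, ?_⟩
  refine le_antisymm (Ordinal.iSup_le fun n => (x (φ n)).2.le) (le_of_forall_lt fun β hβ => ?_)
  obtain ⟨n, hn⟩ :=
    ((hx.comp hφ.tendsto_atTop).eventually_ge_atTop ⟨Order.succ β, hδ.succ_lt hβ⟩).exists
  exact (Order.lt_succ β).trans_le ((Subtype.coe_le_coe.2 hn).trans (Ordinal.le_iSup l n))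

namespace IsIdeal

variable {S : Type*} {I : Set (Set S)}

theorem inter_preimage_Iio_succ_mem (hI : IsIdeal I) {g : S → Ordinal} {B : Set S}
    {β : Ordinal} (hβ : B ∩ g ⁻¹' Iio β ∈ I) (hfib : g ⁻¹' {β} ∈ I) :
    B ∩ g ⁻¹' Iio (Order.succ β) ∈ I := by
  refine hI.subset_mem ?_ (hI.union_mem hβ hfib)
  rw [Order.Iio_succ_eq_insert, insert_eq, preimage_union]
  exact fun n ⟨hnB, hn⟩ => hn.elim Or.inr fun h => Or.inl ⟨hnB, h⟩

theorem inter_preimage_Iio_mem_of_Ico (hI : IsIdeal I) {g : S → Ordinal} {B : Set S}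
    {β γ : Ordinal} (hβ : B ∩ g ⁻¹' Iio β ∈ I) (hβγ : B ∩ g ⁻¹' Ico β γ ∈ I) :
    B ∩ g ⁻¹' Iio γ ∈ I := by
  refine hI.subset_mem ?_ (hI.union_mem hβ hβγ)
  rw [← inter_union_distrib_left, ← preimage_union]
  exact inter_subset_inter_right B (preimage_mono Iio_subset_Iio_union_Ico)

theorem isSuccLimit_of_forall_lt (hI : IsIdeal I) {g : S → Ordinal} {B : Set S}
    {δ : Ordinal} (hfib : ∀ ξ < δ, g ⁻¹' {ξ} ∈ I) (hδ : B ∩ g ⁻¹' Iio δ ∉ I)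
    (hlt : ∀ β < δ, B ∩ g ⁻¹' Iio β ∈ I) : Order.IsSuccLimit δ := by
  rcases Ordinal.zero_or_succ_or_isSuccLimit δ with rfl | ⟨β, rfl⟩ | hlim
  · simp [hI.empty_mem] at hδ
  · have hβ := Order.lt_succ β
    exact absurd (hI.inter_preimage_Iio_succ_mem (hlt β hβ) (hfib β hβ)) hδ
  · exact hlim

theorem exists_strictMono_inter_preimage_Ico (hI : IsIdeal I) {g : S → Ordinal.{u}} {B : Set S}
    {γ : Ordinal.{u}} (hγ : γ.card ≤ Cardinal.aleph0) (hfib : ∀ ξ < γ, g ⁻¹' {ξ} ∈ I)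
    (hB : B ∩ g ⁻¹' Iio γ ∉ I) :
    ∃ l : ℕ → Ordinal, StrictMono l ∧ (∀ n, l n < γ) ∧
      (∀ n, B ∩ g ⁻¹' Ico (l n) (l (n + 1)) ∈ I) ∧ B ∩ g ⁻¹' Ico (l 0) (⨆ n, l n) ∉ I := by
  set δ := sInf {β | B ∩ g ⁻¹' Iio β ∉ I}
  have hδ : B ∩ g ⁻¹' Iio δ ∉ I := csInf_mem (s := {β | B ∩ g ⁻¹' Iio β ∉ I}) ⟨γ, hB⟩
  have hδγ : δ ≤ γ := csInf_le' hB
  have hlt : ∀ β < δ, B ∩ g ⁻¹' Iio β ∈ I := fun β hβ => not_not.1 (notMem_of_lt_csInf' hβ)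
  have hlim := hI.isSuccLimit_of_forall_lt (fun ξ hξ => hfib ξ (hξ.trans_le hδγ)) hδ hlt
  obtain ⟨l, hl, hlδ, hsup⟩ :=
    Ordinal.exists_strictMono_lt_iSup_eq hlim ((Ordinal.card_le_card hδγ).trans hγ)
  refine ⟨l, hl, fun n => (hlδ n).trans_le hδγ, fun n => ?_, ?_⟩
  · exact hI.subset_mem (inter_subset_inter_right B (preimage_mono Ico_subset_Iio_self))
      (hlt _ (hlδ (n + 1)))
  · rw [hsup]
    exact fun h => hδ (hI.inter_preimage_Iio_mem_of_Ico (hlt _ (hlδ 0)) h)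

end IsIdeal

theorem stmt8_general (I : Set (Set ℕ)) (hI : IsIdeal I)
    (a : Ordinal) (hac : a.card ≤ Cardinal.aleph0)
    (f : ℕ → Ordinal) (hf : ∀ n, f n < omega0 ^ a)
    (hfib : ∀ ξ : Ordinal, ξ < omega0 ^ a → f ⁻¹' {ξ} ∈ I)
    (B : Set ℕ) (hB : B ∉ I) :
    ∃ l : ℕ → Ordinal, StrictMono l ∧ (∀ n, l n < omega0 ^ a) ∧
      (∀ n, B ∩ f ⁻¹' (Set.Ico (l n) (l (n + 1))) ∈ I) ∧
      B ∩ f ⁻¹' (Set.Ico (l 0) (⨆ n, l n)) ∉ I := by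
  have hcard : (omega0 ^ a).card ≤ Cardinal.aleph0 :=
    (Ordinal.card_opow_le _ _).trans (max_le le_rfl (max_le Ordinal.card_omega0.le hac))
  have hB' : B ∩ f ⁻¹' Iio (omega0 ^ a) ∉ I := by
    rwa [eq_univ_of_forall (s := f ⁻¹' Iio (omega0 ^ a)) hf, inter_univ]
  exact hI.exists_strictMono_inter_preimage_Ico hcard hfib hB'

/-- The `P`-like property: if all fibers of `f : ω → ω^a` are in `I`, then every
`I`-positive `B` admits a strictly increasing sequence `(λ_n)` in `ω^a` such that
`B ∩ f⁻¹[[λ_n, λ_{n+1})] ∈ I` for all `n`, while `B ∩ f⁻¹[[λ_0, sup λ_n)] ∉ I`. -/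
theorem stmt8 (I : Set (Set ℕ)) (hI : IsIdeal I)
    (hIFin : ∀ F : Set ℕ, F.Finite → F ∈ I)
    (a : Ordinal) (hac : a.card ≤ Cardinal.aleph0)
    (f : ℕ → Ordinal) (hf : ∀ n, f n < omega0 ^ a)
    (hfib : ∀ ξ : Ordinal, ξ < omega0 ^ a → f ⁻¹' {ξ} ∈ I)
    (B : Set ℕ) (hB : B ∉ I) :
    ∃ l : ℕ → Ordinal, StrictMono l ∧ (∀ n, l n < omega0 ^ a) ∧
      (∀ n, B ∩ f ⁻¹' (Set.Ico (l n) (l (n + 1))) ∈ I) ∧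
      B ∩ f ⁻¹' (Set.Ico (l 0) (⨆ n, l n)) ∉ I :=
  stmt8_general I hI a hac f hf hfib B hB
end
end

section
/- For countable ordinals 2 ≤ α < β, conv_β ≤_K conv_α, witnessed by the inclusion map ξ ↦ ξ from ω^α+1 to ω^β+1. -/
open Set Filter Topology Ordinal

noncomputable section

/-- For `2 ≤ α < β`, `conv_β ≤_K conv_α`, witnessed by the inclusion `ξ ↦ ξ`
of `ω^α+1` into `ω^β+1`. -/
theorem stmt12 (a b : Ordinal) (ha : 2 ≤ a) (hab : a < b)
    (hbc : b.card ≤ Cardinal.aleph0) :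
    ∃ f : OrdSpace a → OrdSpace b,
      (∀ x : OrdSpace a, (f x : Ordinal) = (x : Ordinal)) ∧
      ∀ A ∈ convIdeal b, f ⁻¹' A ∈ convIdeal a := by
  have hsub : Set.Iic ((omega0 : Ordinal) ^ a) ⊆ Set.Iic ((omega0 : Ordinal) ^ b) :=
    Set.Iic_subset_Iic.2 (Ordinal.opow_le_opow_right omega0_pos hab.le)
  refine ⟨Set.inclusion hsub, fun x => rfl, fun A hA => ?_⟩
  have hcont : Continuous (Set.inclusion hsub) := continuous_inclusion hsub
  have hinj : Function.Injective (Set.inclusion hsub) := Set.inclusion_injective hsub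
  have hds : derivSet (Set.inclusion hsub ⁻¹' A) ⊆ Set.inclusion hsub ⁻¹' derivSet A := by
    intro p hp
    have hpre : Set.inclusion hsub ⁻¹' (A \ {Set.inclusion hsub p}) =
        Set.inclusion hsub ⁻¹' A \ {p} := by
      ext q
      simp [hinj.eq_iff]
    have : p ∈ closure (Set.inclusion hsub ⁻¹' (A \ {Set.inclusion hsub p})) := by
      rw [hpre]; exact hp
    exact (hcont.closure_preimage_subset _) this
  exact ((hA.preimage hinj.injOn).subset hds)
end
end

section
/- Let I and J be tall ideals on ω containing all finite sets, with J a P-ideal and J ≰_K I. Then J ≰_K I ⊗ Fin. -/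
open Set Filter Topology Ordinal

noncomputable section

/-- If `I, J` are tall ideals on `ω` containing all finite sets, `J` is a P-ideal and
`J ≰_K I`, then `J ≰_K I ⊗ Fin`. -/
theorem stmt15 (I J : Set (Set ℕ)) (hI : IsIdeal I) (hJ : IsIdeal J)
    (hIFin : ∀ F : Set ℕ, F.Finite → F ∈ I)
    (hJFin : ∀ F : Set ℕ, F.Finite → F ∈ J)
    (hItall : ∀ A : Set ℕ, A.Infinite → ∃ B ⊆ A, B.Infinite ∧ B ∈ I)
    (hJtall : ∀ A : Set ℕ, A.Infinite → ∃ B ⊆ A, B.Infinite ∧ B ∈ J)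
    (hJP : ∀ A : ℕ → Set ℕ, (∀ n, A n ∈ J) → ∃ C ∈ J, ∀ n, (A n \ C).Finite)
    (hnK : ¬ KatetovLE J I) :
    ¬ KatetovLE J {A : Set (ℕ × ℕ) | {n : ℕ | {k : ℕ | (n, k) ∈ A}.Infinite} ∈ I} := by
  intro hK
  obtain ⟨f, hf⟩ := hK
  apply hnK
  classical
  -- P n : some fiber of f(n,·) is infinite
  set P : ℕ → Prop := fun n => ∃ m, {k | f (n, k) = m}.Infinite with hPdef
  -- If no fiber is infinite, preimages of finite sets are finite
  have pre_fin : ∀ n, ¬ P n → ∀ F : Set ℕ, F.Finite → {k | f (n, k) ∈ F}.Finite := by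
    intro n hn F hF
    have h1 : {k | f (n, k) ∈ F} = ⋃ m ∈ F, {k | f (n, k) = m} := by
      ext k; simp
    rw [h1]
    refine hF.biUnion fun m _ => ?_
    by_contra h
    exact hn ⟨m, h⟩
  -- If no fiber is infinite, the range of f(n,·) is infinite
  have hrange : ∀ n, ¬ P n → (Set.range fun k => f (n, k)).Infinite := by
    intro n hn
    by_contra h
    rw [Set.not_infinite] at h
    have h2 := pre_fin n hn _ h
    have h3 : {k | f (n, k) ∈ Set.range fun k => f (n, k)} = Set.univ := by
      ext k; simp
    rw [h3] at h2
    exact Set.infinite_univ h2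
  -- Choose B n ∈ J : infinite subset of the range when ¬ P n
  have hBex : ∀ n, ∃ B : Set ℕ, B ∈ J ∧ (¬ P n →
      B ⊆ (Set.range fun k => f (n, k)) ∧ B.Infinite) := by
    intro n
    by_cases hn : P n
    · exact ⟨∅, hJ.empty_mem, fun h => absurd hn h⟩
    · obtain ⟨B, hB1, hB2, hB3⟩ := hJtall _ (hrange n hn)
      exact ⟨B, hB3, fun _ => ⟨hB1, hB2⟩⟩
  choose B hBJ hBspec using hBex
  obtain ⟨C, hCJ, hCfin⟩ := hJP B hBJ
  -- Key: if ¬ P n, then {k | f(n,k) ∈ C} is infinite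
  have key : ∀ n, ¬ P n → {k | f (n, k) ∈ C}.Infinite := by
    intro n hn
    obtain ⟨hBr, hBi⟩ := hBspec n hn
    -- preimage of B n under f(n,·) is infinite
    have hpre : {k | f (n, k) ∈ B n}.Infinite := by
      by_contra h
      rw [Set.not_infinite] at h
      have himg : (fun k => f (n, k)) '' {k | f (n, k) ∈ B n} = B n := by
        apply Set.Subset.antisymm
        · rintro x ⟨k, hk, rfl⟩; exact hk
        · intro m hm
          obtain ⟨k, hk⟩ := hBr hm
          exact ⟨k, by simp [hk, hm], hk⟩
      have := h.image (fun k => f (n, k))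
      rw [himg] at this
      exact hBi this
    have hsub : {k | f (n, k) ∈ B n} ⊆ {k | f (n, k) ∈ B n \ C} ∪ {k | f (n, k) ∈ C} := by
      intro k hk
      by_cases hc : f (n, k) ∈ C
      · exact Or.inr hc
      · exact Or.inl ⟨hk, hc⟩
    have hfin1 : {k | f (n, k) ∈ B n \ C}.Finite := pre_fin n hn _ (hCfin n)
    by_contra h
    rw [Set.not_infinite] at h
    exact hpre (Set.Finite.subset (hfin1.union h) hsub)
  -- D = the I-small set of n's where the C-preimage fiber is infinite
  set D : Set ℕ := {n | {k | f (n, k) ∈ C}.Infinite} with hDdef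
  have hDI : D ∈ I := hf C hCJ
  -- define g
  set g : ℕ → ℕ := fun n => if h : P n then h.choose else 0 with hgdef
  refine ⟨g, fun A hA => ?_⟩
  have hAI : {n | {k | f (n, k) ∈ A}.Infinite} ∈ I := hf A hA
  refine hI.subset_mem (B := D ∪ {n | {k | f (n, k) ∈ A}.Infinite}) ?_ (hI.union_mem hDI hAI)
  intro n hn
  by_cases hp : P n
  · right
    have hg : g n = hp.choose := by simp [hgdef, hp]
    have hfiber : {k | f (n, k) = hp.choose}.Infinite := hp.choose_spec
    have : g n ∈ A := hn
    refine hfiber.mono ?_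
    intro k hk
    simp only [Set.mem_setOf_eq] at hk ⊢
    rw [hk, ← hg]
    exact this
  · exact Or.inl (key n hp)
end
end

section
/- For every countable ordinal α ≥ 2, non*(conv_α) = ℵ₀: there exists a countable family A of infinite subsets of ω^α+1 such that every B ∈ conv_α has finite intersection with some member of A. -/
open Set Filter Topology Ordinal

noncomputable section

/-! The columns `[ω·n, ω·n + ω)`, `n : ℕ`, are countably many infinite subsets of
`ω^2 ≤ ω^α`. A set meeting every column in an infinite set accumulates at each of the
distinct points `ω·n + ω`, so its derived set is infinite; hence every member of `conv_α`
is almost disjoint from some column. -/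

theorem Ordinal.tendsto_add_natCast_atTop (o : Ordinal) :
    Tendsto (fun m : ℕ => o + m) atTop (𝓝 (o + ω)) := by
  rw [← iSup_add_natCast]
  exact tendsto_atTop_ciSup (fun m n h => by gcongr) bddAbove_of_small

lemma Subtype.mem_derivSet_iff {X : Type*} [TopologicalSpace X] {p : X → Prop}
    {A : Set (Subtype p)} {x : Subtype p} :
    x ∈ derivSet A ↔ (x : X) ∈ derivSet (Subtype.val '' A) := by
  simp only [derivSet, mem_ofPred_eq, closure_subtype, image_sdiff Subtype.val_injective,
    image_singleton]

lemma Ordinal.add_omega0_mem_derivSet {o : Ordinal} {s : Set Ordinal}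
    (hs : {m : ℕ | o + m ∈ s}.Infinite) : o + ω ∈ derivSet s := by
  refine mem_closure_of_frequently_of_tendsto ?_ (tendsto_add_natCast_atTop o)
  refine (Nat.frequently_atTop_iff_infinite.2 hs).mono fun m hm => ⟨hm, ?_⟩
  exact (add_lt_add_right (natCast_lt_omega0 m) o).ne

lemma Ordinal.omega0_mul_natCast_add_omega0 (n : ℕ) : ω * n + ω = ω * (n + 1 : ℕ) := by
  push_cast
  rw [mul_add, mul_one]

lemma Ordinal.omega0_mul_natCast_add_omega0_le_opow {a : Ordinal} (ha : 2 ≤ a) (n : ℕ) :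
    ω * n + ω ≤ ω ^ a :=
  calc ω * n + ω = ω * (n + 1 : ℕ) := omega0_mul_natCast_add_omega0 n
    _ ≤ ω ^ (1 + 1 : Ordinal) := by
      rw [opow_one_add, opow_one]; exact mul_le_mul_right (natCast_lt_omega0 _).le _
    _ ≤ ω ^ a := opow_le_opow_right omega0_pos (by rwa [one_add_one_eq_two])

def column (a : Ordinal) (n : ℕ) : Set (OrdSpace a) :=
  {x | ∃ m : ℕ, (x : Ordinal) = ω * n + m}

lemma column_infinite {a : Ordinal} (ha : 2 ≤ a) (n : ℕ) : (column a n).Infinite := by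
  have hle (m : ℕ) : ω * n + m ≤ ω ^ a :=
    (add_lt_add_right (natCast_lt_omega0 m) _).le.trans
      (omega0_mul_natCast_add_omega0_le_opow ha n)
  refine infinite_of_injective_forall_mem (f := fun m : ℕ => (⟨ω * n + m, hle m⟩ : OrdSpace a))
    (fun m m' h => ?_) fun m => ⟨m, rfl⟩
  exact_mod_cast add_left_cancel (congrArg Subtype.val h)

lemma column_limit_mem_derivSet {a : Ordinal} (ha : 2 ≤ a) {n : ℕ} {B : Set (OrdSpace a)}
    (hB : (column a n ∩ B).Infinite) :
    (⟨ω * n + ω, omega0_mul_natCast_add_omega0_le_opow ha n⟩ : OrdSpace a) ∈ derivSet B := by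
  refine Subtype.mem_derivSet_iff.2 (add_omega0_mem_derivSet ?_)
  refine ((hB.image Subtype.val_injective.injOn).mono ?_).of_image fun m : ℕ => ω * n + m
  rintro _ ⟨x, ⟨⟨m, hm⟩, hxB⟩, rfl⟩
  exact ⟨m, ⟨x, hxB, hm⟩, hm.symm⟩

lemma derivSet_infinite_of_forall_column_inter_infinite {a : Ordinal} (ha : 2 ≤ a)
    {B : Set (OrdSpace a)} (hB : ∀ n, (column a n ∩ B).Infinite) : (derivSet B).Infinite := by
  refine infinite_of_injective_forall_mem (fun n n' h => ?_)
    fun n => column_limit_mem_derivSet ha (hB n)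
  have hmono : StrictMono fun n : ℕ => ω * n + ω := fun n n' h =>
    calc ω * n + ω = ω * (n + 1 : ℕ) := omega0_mul_natCast_add_omega0 n
      _ ≤ ω * n' := mul_le_mul_right (by exact_mod_cast h) _
      _ < ω * n' + ω := lt_add_of_pos_right _ omega0_pos
  exact hmono.injective (congrArg Subtype.val h)

theorem stmt18_general (a : Ordinal) (ha : 2 ≤ a) :
    ∃ 𝒜 : Set (Set (OrdSpace a)), 𝒜.Countable ∧ (∀ A ∈ 𝒜, A.Infinite) ∧
      ∀ B ∈ convIdeal a, ∃ A ∈ 𝒜, (A ∩ B).Finite := by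
  refine ⟨range (column a), countable_range _, forall_mem_range.2 (column_infinite ha),
    fun B hB => ?_⟩
  by_contra! h
  exact derivSet_infinite_of_forall_column_inter_infinite ha (fun n => h _ ⟨n, rfl⟩) hB

/-- `non*(conv_α) = ℵ₀`: there is a countable family of infinite subsets of `ω^α+1`
such that every member of `conv_α` is almost disjoint from some member of the family. -/
theorem stmt18 (a : Ordinal) (ha : 2 ≤ a) (hac : a.card ≤ Cardinal.aleph0) :
    ∃ 𝒜 : Set (Set (OrdSpace a)), 𝒜.Countable ∧ (∀ A ∈ 𝒜, A.Infinite) ∧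
      ∀ B ∈ convIdeal a, ∃ A ∈ 𝒜, (A ∩ B).Finite :=
  stmt18_general a ha
end
end
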